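/- arXiv:1509.02045 — 3 statements merged into one kernel-verified Lean document; each statement's English description precedes it below -/
import Mathlib

section
/- For η > -1 fixed and A_ρ distributed according to ν_{ρ,η}, one has lim_{ρ→∞} E(A_ρ)/√ρ = 1. -/
open scoped BigOperators

/-- Unnormalized weight of the distribution `ν_{ρ,η}`. -/
noncomputable def nuWeight (η ρ : ℝ) (k : ℕ) : ℝ :=
  ρ ^ k / (Nat.factorial k : ℝ) * ∏ i ∈ Finset.range k, 1 / (η + (i + 1))

/-- The distribution `ν_{ρ,η}(k) = (1/Z_ρ)·ρ^k/k!·∏_{i=1}^k 1/(η+i)`. -/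
noncomputable def nuDist (η ρ : ℝ) (k : ℕ) : ℝ :=
  nuWeight η ρ k / ∑' j : ℕ, nuWeight η ρ j

set_option linter.unusedSectionVars false

section
variable {η ρ : ℝ} (hη : -1 < η) (hρ : 0 < ρ)

include hη in
lemma eta_add_pos (i : ℕ) : 0 < η + ((i:ℝ) + 1) := by
  have : (0:ℝ) ≤ i := Nat.cast_nonneg i
  linarith

include hη hρ in
lemma nuWeight_pos (k : ℕ) : 0 < nuWeight η ρ k := by
  unfold nuWeight
  apply mul_pos
  · positivity
  · exact Finset.prod_pos fun i _ => by
      have := eta_add_pos hη i; positivity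

include hη in
lemma nuWeight_rec (k : ℕ) :
    ((k:ℝ) + 1) * (η + ((k:ℝ) + 1)) * nuWeight η ρ (k+1) = ρ * nuWeight η ρ k := by
  unfold nuWeight
  rw [Finset.prod_range_succ, Nat.factorial_succ, pow_succ]
  have h1 : ((Nat.factorial k : ℝ)) ≠ 0 := Nat.cast_ne_zero.mpr (Nat.factorial_ne_zero k)
  have h2 : η + ((k:ℝ) + 1) ≠ 0 := ne_of_gt (eta_add_pos hη k)
  set P := ∏ i ∈ Finset.range k, 1 / (η + ((i:ℝ) + 1)) with hP
  push_cast
  field_simp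

end

section
variable {η ρ : ℝ} (hη : -1 < η) (hρ : 0 < ρ)

include hη hρ in
lemma summable_pow_mul (j : ℕ) :
    Summable (fun k : ℕ => ((k:ℝ) + 1) ^ j * nuWeight η ρ k) := by
  apply summable_of_ratio_norm_eventually_le (r := 1/2) (by norm_num)
  obtain ⟨N, hN⟩ := exists_nat_ge (2 ^ (j+1) * ρ + |η|)
  filter_upwards [Filter.eventually_ge_atTop N] with k hk
  have hkN : (2:ℝ) ^ (j+1) * ρ + |η| ≤ k := le_trans hN (by exact_mod_cast hk)
  have hw := nuWeight_pos hη hρ (η := η) (ρ := ρ) k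
  have hw1 := nuWeight_pos hη hρ (η := η) (ρ := ρ) (k+1)
  have hrec := nuWeight_rec hη (ρ := ρ) k
  rw [Real.norm_eq_abs, Real.norm_eq_abs, abs_of_pos (by positivity), abs_of_pos (by positivity)]
  -- key : ((k+2)^j) * w(k+1) ≤ 1/2 * (k+1)^j * w k
  have hη1 : (0:ℝ) < η + ((k:ℝ)+1) := eta_add_pos hη k
  have hwk1 : nuWeight η ρ (k+1) = ρ * nuWeight η ρ k / (((k:ℝ)+1) * (η + ((k:ℝ)+1))) := by
    field_simp at hrec ⊢
    linarith [hrec]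
  rw [hwk1]
  have h2 : ((k:ℝ) + 1 + 1) ^ j ≤ 2 ^ j * ((k:ℝ)+1) ^ j := by
    rw [← mul_pow]
    apply pow_le_pow_left₀ (by positivity)
    linarith
  push_cast
  have hbig : 2 * (2:ℝ) ^ j * ρ ≤ ((k:ℝ)+1) * (η + ((k:ℝ)+1)) := by
    have h3 : (1:ℝ) ≤ η + ((k:ℝ)+1) := by
      have : |η| ≤ (k:ℝ) := by nlinarith [pow_pos (by norm_num : (0:ℝ) < 2) (j+1), abs_nonneg η]
      have := neg_abs_le η
      linarith
    have h4 : 2 * (2:ℝ) ^ j * ρ ≤ (k:ℝ) + 1 := by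
      have : (2:ℝ) ^ (j+1) = 2 ^ j * 2 := pow_succ 2 j
      nlinarith [abs_nonneg η]
    nlinarith [mul_pos hρ (pow_pos (by norm_num : (0:ℝ) < 2) j)]
  have hstep : ρ * nuWeight η ρ k / (((k:ℝ)+1) * (η + ((k:ℝ)+1)))
      ≤ nuWeight η ρ k / (2 * 2 ^ j) := by
    rw [div_le_div_iff₀ (by positivity) (by positivity)]
    nlinarith [mul_pos hρ hw, pow_pos (by norm_num : (0:ℝ) < 2) j]
  calc ((k:ℝ) + 1 + 1) ^ j * (ρ * nuWeight η ρ k / (((k:ℝ)+1) * (η + ((k:ℝ)+1))))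
      ≤ 2 ^ j * ((k:ℝ)+1) ^ j * (nuWeight η ρ k / (2 * 2 ^ j)) := by
        apply mul_le_mul h2 hstep (by positivity) (by positivity)
    _ = 1/2 * (((k:ℝ)+1) ^ j * nuWeight η ρ k) := by
        field_simp

end

def phi (η : ℝ) (k : ℕ) : ℝ := (k:ℝ) * ((k:ℝ) + η)

section
variable {η ρ : ℝ} (hη : -1 < η) (hρ : 0 < ρ)

include hη hρ in
lemma summable_poly_mul {g : ℕ → ℝ} {C : ℝ} {j : ℕ}
    (hg : ∀ k, |g k| ≤ C * ((k:ℝ)+1)^j) :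
    Summable (fun k : ℕ => g k * nuWeight η ρ k) := by
  apply Summable.of_norm_bounded (g := fun k : ℕ => C * (((k:ℝ)+1)^j * nuWeight η ρ k))
    (((summable_pow_mul hη hρ j)).mul_left C)
  intro k
  have hw := nuWeight_pos hη hρ (η := η) (ρ := ρ) k
  rw [Real.norm_eq_abs, abs_mul, abs_of_pos hw]
  calc |g k| * nuWeight η ρ k ≤ (C * ((k:ℝ)+1)^j) * nuWeight η ρ k :=
        mul_le_mul_of_nonneg_right (hg k) hw.le
    _ = C * (((k:ℝ)+1)^j * nuWeight η ρ k) := by ring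

include hη in
lemma phi_nonneg (k : ℕ) : 0 ≤ phi η k := by
  unfold phi
  rcases Nat.eq_zero_or_pos k with h | h
  · simp [h]
  · have h1 : (1:ℝ) ≤ (k:ℝ) := by exact_mod_cast h
    nlinarith [hη]

include hη hρ in
lemma sumW : Summable (fun k : ℕ => nuWeight η ρ k) := by
  have := summable_poly_mul hη hρ (g := fun _ => (1:ℝ)) (C := 1) (j := 0) (by intro k; simp)
  simpa using this

include hη hρ in
lemma sumK : Summable (fun k : ℕ => (k:ℝ) * nuWeight η ρ k) :=
  summable_poly_mul hη hρ (C := 1) (j := 1) (by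
    intro k
    rw [abs_of_nonneg (Nat.cast_nonneg k)]
    have h1 : (0:ℝ) ≤ k := Nat.cast_nonneg k
    nlinarith)

include hη hρ in
lemma sumK2 : Summable (fun k : ℕ => (k:ℝ)^2 * nuWeight η ρ k) :=
  summable_poly_mul hη hρ (C := 1) (j := 2) (by
    intro k
    rw [abs_of_nonneg (by positivity)]
    have : (0:ℝ) ≤ k := Nat.cast_nonneg k
    nlinarith)

include hη hρ in
lemma sumPhi : Summable (fun k : ℕ => phi η k * nuWeight η ρ k) :=
  summable_poly_mul hη hρ (C := 1 + |η|) (j := 2) (by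
    intro k
    rw [abs_of_nonneg (phi_nonneg hη k)]
    unfold phi
    have h1 : (0:ℝ) ≤ k := Nat.cast_nonneg k
    have h2 : η ≤ |η| := le_abs_self η
    have h3 : (0:ℝ) ≤ |η| := abs_nonneg η
    nlinarith [mul_le_mul_of_nonneg_right h2 h1, mul_nonneg h3 h1,
      mul_nonneg h3 (mul_nonneg h1 h1)])

include hη hρ in
lemma sumPhiSq : Summable (fun k : ℕ => (phi η k)^2 * nuWeight η ρ k) :=
  summable_poly_mul hη hρ (C := (1 + |η|)^2) (j := 4) (by
    intro k
    rw [abs_of_nonneg (by positivity)]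
    unfold phi
    have h1 : (0:ℝ) ≤ k := Nat.cast_nonneg k
    have h2 : η ≤ |η| := le_abs_self η
    have h3 : (0:ℝ) ≤ |η| := abs_nonneg η
    have key : (k:ℝ) * ((k:ℝ) + η) ≤ (1 + |η|) * ((k:ℝ)+1)^2 := by
      nlinarith [mul_le_mul_of_nonneg_right h2 h1, mul_nonneg h3 h1,
        mul_nonneg h3 (mul_nonneg h1 h1)]
    have key0 : (0:ℝ) ≤ (k:ℝ) * ((k:ℝ) + η) := phi_nonneg hη k
    calc ((k:ℝ) * ((k:ℝ) + η))^2 ≤ ((1 + |η|) * ((k:ℝ)+1)^2)^2 := by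
          apply pow_le_pow_left₀ key0 key
      _ = (1 + |η|)^2 * ((k:ℝ)+1)^4 := by ring)

include hη hρ in
lemma sumPhiK : Summable (fun k : ℕ => (phi η k * (k:ℝ)) * nuWeight η ρ k) :=
  summable_poly_mul hη hρ (C := 1 + |η|) (j := 3) (by
    intro k
    have h1 : (0:ℝ) ≤ k := Nat.cast_nonneg k
    rw [abs_of_nonneg (mul_nonneg (phi_nonneg hη k) h1)]
    unfold phi
    have h2 : η ≤ |η| := le_abs_self η
    have h3 : (0:ℝ) ≤ |η| := abs_nonneg η
    nlinarith [mul_le_mul_of_nonneg_right (mul_le_mul_of_nonneg_right h2 h1) h1,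
      mul_nonneg h3 h1, mul_nonneg h3 (mul_nonneg h1 h1),
      mul_nonneg (mul_nonneg h3 h1) (mul_nonneg h1 h1)])

include hη hρ in
lemma sumSqrtPhi : Summable (fun k : ℕ => Real.sqrt (phi η k) * nuWeight η ρ k) :=
  summable_poly_mul hη hρ (C := 1 + |η|) (j := 1) (by
    intro k
    have h1 : (0:ℝ) ≤ k := Nat.cast_nonneg k
    have h3 : (0:ℝ) ≤ |η| := abs_nonneg η
    rw [abs_of_nonneg (Real.sqrt_nonneg _)]
    have : phi η k ≤ ((k:ℝ) + |η|)^2 := by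
      unfold phi
      have h2 : η ≤ |η| := le_abs_self η
      nlinarith
    calc Real.sqrt (phi η k) ≤ Real.sqrt (((k:ℝ) + |η|)^2) := Real.sqrt_le_sqrt this
      _ = (k:ℝ) + |η| := Real.sqrt_sq (by positivity)
      _ ≤ (1 + |η|) * ((k:ℝ)+1)^1 := by nlinarith)

include hη hρ in
lemma Z_pos : 0 < ∑' k : ℕ, nuWeight η ρ k := by
  have h0 := nuWeight_pos hη hρ (η := η) (ρ := ρ) 0
  calc (0:ℝ) < nuWeight η ρ 0 := h0
    _ ≤ ∑' k : ℕ, nuWeight η ρ k :=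
      Summable.le_tsum (sumW hη hρ) 0 (fun j _ => (nuWeight_pos hη hρ j).le)

end

section
variable {η ρ : ℝ} (hη : -1 < η) (hρ : 0 < ρ)

include hη in
lemma phi_rec (k : ℕ) : phi η (k+1) * nuWeight η ρ (k+1) = ρ * nuWeight η ρ k := by
  have h := nuWeight_rec hη (ρ := ρ) k
  unfold phi
  push_cast
  linear_combination h

include hη hρ in
lemma tsumA : ∑' k : ℕ, phi η k * nuWeight η ρ k = ρ * ∑' k : ℕ, nuWeight η ρ k := by
  have hs := sumPhi hη hρ
  rw [Summable.tsum_eq_zero_add hs]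
  have h0 : phi η 0 * nuWeight η ρ 0 = 0 := by simp [phi]
  rw [h0, zero_add, tsum_congr (fun k => phi_rec hη (ρ := ρ) k), tsum_mul_left]

include hη hρ in
lemma sumPrev : Summable (fun k : ℕ =>
    (phi η k * (((k:ℝ)-1) * (((k:ℝ)-1) + η))) * nuWeight η ρ k) := by
  apply summable_poly_mul hη hρ (C := (1 + |η|)^2) (j := 4)
  intro k
  have h1 : (0:ℝ) ≤ k := Nat.cast_nonneg k
  have h2 : η ≤ |η| := le_abs_self η
  have h2' : -|η| ≤ η := neg_abs_le η
  have h3 : (0:ℝ) ≤ |η| := abs_nonneg η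
  rw [abs_mul]
  have hphi : |phi η k| ≤ (1 + |η|) * ((k:ℝ)+1)^2 := by
    rw [abs_of_nonneg (phi_nonneg hη k)]
    unfold phi
    nlinarith [mul_le_mul_of_nonneg_right h2 h1, mul_nonneg h3 h1,
      mul_nonneg h3 (mul_nonneg h1 h1)]
  have hprev : |((k:ℝ)-1) * (((k:ℝ)-1) + η)| ≤ (1 + |η|) * ((k:ℝ)+1)^2 := by
    rw [abs_mul]
    have e1 : |(k:ℝ)-1| ≤ (k:ℝ)+1 := abs_le.mpr ⟨by linarith, by linarith⟩
    have e2 : |((k:ℝ)-1) + η| ≤ ((k:ℝ)+1) + |η| := by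
      apply abs_le.mpr; constructor <;> linarith
    calc |(k:ℝ)-1| * |((k:ℝ)-1) + η| ≤ ((k:ℝ)+1) * (((k:ℝ)+1) + |η|) := by
          apply mul_le_mul e1 e2 (abs_nonneg _) (by positivity)
      _ ≤ (1 + |η|) * ((k:ℝ)+1)^2 := by nlinarith [mul_nonneg h3 h1, mul_nonneg h3 (mul_nonneg h1 h1)]
  calc |phi η k| * |((k:ℝ)-1) * (((k:ℝ)-1) + η)|
      ≤ ((1 + |η|) * ((k:ℝ)+1)^2) * ((1 + |η|) * ((k:ℝ)+1)^2) := by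
        apply mul_le_mul hphi hprev (abs_nonneg _) (by positivity)
    _ = (1 + |η|)^2 * ((k:ℝ)+1)^4 := by ring

include hη hρ in
lemma tsumB : ∑' k : ℕ, (phi η k * (((k:ℝ)-1) * (((k:ℝ)-1) + η))) * nuWeight η ρ k
    = ρ^2 * ∑' k : ℕ, nuWeight η ρ k := by
  rw [Summable.tsum_eq_zero_add (sumPrev hη hρ)]
  have h0 : (phi η 0 * (((0:ℕ):ℝ)-1) * ((((0:ℕ):ℝ)-1) + η)) = 0 := by simp [phi]
  have hterm : ∀ k : ℕ,
      (phi η (k+1) * (((((k+1):ℕ)):ℝ)-1) * ((((((k+1):ℕ)):ℝ)-1) + η)) * nuWeight η ρ (k+1)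
        = ρ * (phi η k * nuWeight η ρ k) := by
    intro k
    have h := phi_rec hη (ρ := ρ) k
    unfold phi at *
    push_cast at *
    linear_combination ((k:ℝ) * ((k:ℝ) + η)) * h
  simp only [phi] at h0 hterm ⊢
  push_cast at h0 hterm ⊢
  rw [show (0:ℝ) * (0 + η) * ((0 - 1) * (0 - 1 + η)) * nuWeight η ρ 0 = 0 by ring]
  rw [zero_add]
  calc ∑' k : ℕ, ((k:ℝ)+1) * (((k:ℝ)+1) + η) * (((((k:ℝ)+1)-1)) * (((((k:ℝ)+1)-1)) + η)) * nuWeight η ρ (k+1)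
      = ∑' k : ℕ, ρ * (((k:ℝ) * ((k:ℝ) + η)) * nuWeight η ρ k) := by
        apply tsum_congr
        intro k
        linear_combination hterm k
    _ = ρ * ∑' k : ℕ, ((k:ℝ) * ((k:ℝ) + η)) * nuWeight η ρ k := tsum_mul_left
    _ = ρ^2 * ∑' k : ℕ, nuWeight η ρ k := by
        have := tsumA hη hρ
        simp only [phi] at this
        rw [this]; ring

end

lemma sqrt_cubic_lb {t x : ℝ} (hx : 0 ≤ x) (ht : 0 < t) :
    3*x/(2*t) - x^2/(2*t^3) ≤ Real.sqrt x := by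
  have hs := Real.sq_sqrt hx
  have hsn := Real.sqrt_nonneg x
  set s := Real.sqrt x with hsdef
  have h1 : 3*x/(2*t) - x^2/(2*t^3) = (3*x*t^2 - x^2)/(2*t^3) := by
    field_simp
  rw [h1, div_le_iff₀ (by positivity)]
  have key : 0 ≤ s*(s-t)^2*(s+2*t) := by positivity
  nlinarith [key, hs]

lemma am_gm_div {a b t : ℝ} (ht : 0 < t) : 2*(a*b) ≤ a^2/t + t*b^2 := by
  rw [div_add' _ _ _ (ne_of_gt ht), le_div_iff₀ ht]
  nlinarith [sq_nonneg (a - t*b)]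

section
variable {η ρ : ℝ} (hη : -1 < η) (hρ : 0 < ρ)

include hη hρ in
lemma tsumC : ∑' k : ℕ, (phi η k)^2 * nuWeight η ρ k
    = ρ^2 * (∑' k : ℕ, nuWeight η ρ k)
      + (2 * ∑' k : ℕ, (phi η k * (k:ℝ)) * nuWeight η ρ k
      + (η-1) * ∑' k : ℕ, phi η k * nuWeight η ρ k) := by
  have hpt : ∀ k : ℕ, (phi η k)^2 * nuWeight η ρ k
      = (phi η k * (((k:ℝ)-1) * (((k:ℝ)-1) + η))) * nuWeight η ρ k
        + (2*((phi η k * (k:ℝ)) * nuWeight η ρ k) + (η-1)*(phi η k * nuWeight η ρ k)) := by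
    intro k; unfold phi; ring
  rw [tsum_congr hpt,
    Summable.tsum_add (sumPrev hη hρ) (Summable.add ((sumPhiK hη hρ).mul_left 2) ((sumPhi hη hρ).mul_left (η-1))),
    Summable.tsum_add ((sumPhiK hη hρ).mul_left 2) ((sumPhi hη hρ).mul_left (η-1)),
    tsum_mul_left, tsum_mul_left, tsumB hη hρ]

include hη hρ in
lemma tsumK2_le : ∑' k : ℕ, (k:ℝ)^2 * nuWeight η ρ k
    ≤ max 1 (1/(1+η)) * (ρ * ∑' k : ℕ, nuWeight η ρ k) := by
  set c := max 1 (1/(1+η)) with hc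
  have hc1 : (1:ℝ) ≤ c := le_max_left _ _
  have hc2 : 1/(1+η) ≤ c := le_max_right _ _
  have h1η : (0:ℝ) < 1 + η := by linarith
  have hcc : 1 ≤ c * (1+η) := by
    rw [div_le_iff₀ h1η] at hc2
    linarith
  have hpt : ∀ k : ℕ, (k:ℝ)^2 * nuWeight η ρ k ≤ c * (phi η k * nuWeight η ρ k) := by
    intro k
    have hw := (nuWeight_pos hη hρ (η := η) (ρ := ρ) k).le
    have hk2 : (k:ℝ)^2 ≤ c * phi η k := by
      rcases Nat.eq_zero_or_pos k with h | h
      · simp [h, phi]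
      · have h1 : (1:ℝ) ≤ (k:ℝ) := by exact_mod_cast h
        unfold phi
        have hPnn : (0:ℝ) ≤ (k:ℝ)*((k:ℝ)+η) := by nlinarith
        rcases le_or_gt 0 η with hs | hs
        · have e1 : (k:ℝ)^2 ≤ (k:ℝ)*((k:ℝ)+η) := by nlinarith
          have e2 : (k:ℝ)*((k:ℝ)+η) ≤ c*((k:ℝ)*((k:ℝ)+η)) := le_mul_of_one_le_left hPnn hc1
          linarith
        · have hint : (0:ℝ) ≤ (-η) * ((k:ℝ)*((k:ℝ)-1)) :=
            mul_nonneg (by linarith) (mul_nonneg (by linarith) (by linarith))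
          have h4 : (k:ℝ)^2*(1+η) ≤ (k:ℝ)*((k:ℝ)+η) := by nlinarith
          have h5 : (k:ℝ)^2 ≤ ((k:ℝ)*((k:ℝ)+η))/(1+η) := (le_div_iff₀ h1η).mpr h4
          have h6 : ((k:ℝ)*((k:ℝ)+η))/(1+η) = ((k:ℝ)*((k:ℝ)+η)) * (1/(1+η)) := by ring
          have h7 : ((k:ℝ)*((k:ℝ)+η)) * (1/(1+η)) ≤ ((k:ℝ)*((k:ℝ)+η)) * c :=
            mul_le_mul_of_nonneg_left hc2 hPnn
          calc (k:ℝ)^2 ≤ ((k:ℝ)*((k:ℝ)+η)) * c := by rw [h6] at h5; linarith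
            _ = c*((k:ℝ)*((k:ℝ)+η)) := by ring
    calc (k:ℝ)^2 * nuWeight η ρ k ≤ (c * phi η k) * nuWeight η ρ k :=
          mul_le_mul_of_nonneg_right hk2 hw
      _ = c * (phi η k * nuWeight η ρ k) := by ring
  calc ∑' k : ℕ, (k:ℝ)^2 * nuWeight η ρ k
      ≤ ∑' k : ℕ, c * (phi η k * nuWeight η ρ k) :=
        Summable.tsum_le_tsum hpt (sumK2 hη hρ) ((sumPhi hη hρ).mul_left c)
    _ = c * (ρ * ∑' k : ℕ, nuWeight η ρ k) := by rw [tsum_mul_left, tsumA hη hρ]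

end

section
variable {η ρ : ℝ} (hη : -1 < η) (hρ : 0 < ρ)

include hη hρ in
lemma tsumAM : 2 * ∑' k : ℕ, (phi η k * (k:ℝ)) * nuWeight η ρ k
    ≤ (1/Real.sqrt ρ) * ∑' k : ℕ, (phi η k)^2 * nuWeight η ρ k
      + Real.sqrt ρ * ∑' k : ℕ, (k:ℝ)^2 * nuWeight η ρ k := by
  have htpos : 0 < Real.sqrt ρ := Real.sqrt_pos.mpr hρ
  set t := Real.sqrt ρ with htdef
  have hpt : ∀ k : ℕ, 2*((phi η k * (k:ℝ)) * nuWeight η ρ k)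
      ≤ (1/t)*((phi η k)^2 * nuWeight η ρ k) + t*((k:ℝ)^2 * nuWeight η ρ k) := by
    intro k
    have hw := (nuWeight_pos hη hρ (η := η) (ρ := ρ) k).le
    have base := am_gm_div (a := phi η k) (b := (k:ℝ)) htpos
    calc 2*((phi η k * (k:ℝ)) * nuWeight η ρ k)
        = (2*(phi η k * (k:ℝ))) * nuWeight η ρ k := by ring
      _ ≤ ((phi η k)^2/t + t*(k:ℝ)^2) * nuWeight η ρ k :=
          mul_le_mul_of_nonneg_right base hw
      _ = (1/t)*((phi η k)^2 * nuWeight η ρ k) + t*((k:ℝ)^2 * nuWeight η ρ k) := by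
          field_simp
  calc 2 * ∑' k : ℕ, (phi η k * (k:ℝ)) * nuWeight η ρ k
      = ∑' k : ℕ, 2*((phi η k * (k:ℝ)) * nuWeight η ρ k) := tsum_mul_left.symm
    _ ≤ ∑' k : ℕ, ((1/t)*((phi η k)^2 * nuWeight η ρ k) + t*((k:ℝ)^2 * nuWeight η ρ k)) :=
        Summable.tsum_le_tsum hpt ((sumPhiK hη hρ).mul_left 2)
          (Summable.add ((sumPhiSq hη hρ).mul_left (1/t)) ((sumK2 hη hρ).mul_left t))
    _ = (1/t) * ∑' k : ℕ, (phi η k)^2 * nuWeight η ρ k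
        + t * ∑' k : ℕ, (k:ℝ)^2 * nuWeight η ρ k := by
        rw [Summable.tsum_add ((sumPhiSq hη hρ).mul_left (1/t)) ((sumK2 hη hρ).mul_left t),
          tsum_mul_left, tsum_mul_left]

include hη in
lemma SP2_le (hρ' : (max 1 (1/(1+η)) + |η-1| + 3)^2 + 4 ≤ ρ) :
    ∑' k : ℕ, (phi η k)^2 * nuWeight η ρ k
      ≤ ρ^2 * (∑' k : ℕ, nuWeight η ρ k)
        + (max 1 (1/(1+η)) + |η-1| + 3) * (ρ * Real.sqrt ρ) * (∑' k : ℕ, nuWeight η ρ k) := by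
  have habs : (0:ℝ) ≤ |η-1| := abs_nonneg _
  have hc1 : (1:ℝ) ≤ max 1 (1/(1+η)) := le_max_left _ _
  have hρpos : 0 < ρ := by nlinarith [sq_nonneg (max 1 (1/(1+η)) + |η-1| + 3)]
  have htpos : 0 < Real.sqrt ρ := Real.sqrt_pos.mpr hρpos
  have ht2 : (Real.sqrt ρ)^2 = ρ := Real.sq_sqrt hρpos.le
  have hS0pos : 0 < ∑' k : ℕ, nuWeight η ρ k := Z_pos hη hρpos
  have hSP2nn : 0 ≤ ∑' k : ℕ, (phi η k)^2 * nuWeight η ρ k := tsum_nonneg fun k =>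
    mul_nonneg (sq_nonneg _) (nuWeight_pos hη hρpos k).le
  have hSP : ∑' k : ℕ, phi η k * nuWeight η ρ k = ρ * ∑' k : ℕ, nuWeight η ρ k := tsumA hη hρpos
  have hC := tsumC hη hρpos
  have hAM := tsumAM hη hρpos
  have hK2 := tsumK2_le hη hρpos
  have hsgn : (η-1) * ∑' k : ℕ, phi η k * nuWeight η ρ k
      ≤ |η-1| * (ρ * ∑' k : ℕ, nuWeight η ρ k) := by
    rw [hSP]
    apply mul_le_mul_of_nonneg_right (le_abs_self _) (by positivity)
  set c := max 1 (1/(1+η)) with hcdef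
  set t := Real.sqrt ρ with htdef
  set S0 := ∑' k : ℕ, nuWeight η ρ k with hS0def
  set SP2 := ∑' k : ℕ, (phi η k)^2 * nuWeight η ρ k with hSP2def
  set SPK := ∑' k : ℕ, (phi η k * (k:ℝ)) * nuWeight η ρ k with hSPKdef
  set SK2 := ∑' k : ℕ, (k:ℝ)^2 * nuWeight η ρ k with hSK2def
  have hρ4 : (c + |η-1| + 3)^2 ≤ ρ := by linarith
  have htD : c + |η-1| + 3 ≤ t := by
    have h := Real.sqrt_le_sqrt hρ4
    rwa [Real.sqrt_sq (by linarith)] at h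
  have ht1 : (0:ℝ) < t - 1 := by linarith
  have hK2' : t * SK2 ≤ t * (c * (ρ * S0)) := mul_le_mul_of_nonneg_left hK2 htpos.le
  have hIneq : SP2 ≤ ρ^2 * S0 + ((1/t) * SP2 + t * (c * (ρ * S0)) + |η-1| * (ρ * S0)) := by
    linarith [hC, hAM, hK2', hsgn]
  have hIneq' : SP2 * t ≤ ρ^2 * S0 * t + (SP2 + t * (c * (ρ * S0)) * t + |η-1| * (ρ * S0) * t) := by
    have h := mul_le_mul_of_nonneg_right hIneq htpos.le
    have hcancel : (1/t * SP2 + t * (c * (ρ * S0)) + |η-1| * (ρ * S0)) * t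
        = SP2 + t * (c * (ρ * S0)) * t + |η-1| * (ρ * S0) * t := by
      field_simp
    nlinarith [h]
  have hρt : ρ = t^2 := ht2.symm
  rw [hρt] at hIneq' ⊢
  nlinarith [hIneq', ht1, htD, hc1, habs, hSP2nn, hS0pos,
    mul_nonneg (mul_nonneg (pow_nonneg htpos.le 3) hS0pos.le) (sub_nonneg.mpr htD),
    mul_nonneg (mul_nonneg (pow_nonneg htpos.le 3) hS0pos.le) habs,
    mul_nonneg (mul_nonneg (mul_nonneg (pow_nonneg htpos.le 3) hS0pos.le) habs) ht1.le,
    mul_pos (pow_pos htpos 3) hS0pos, mul_pos (pow_pos htpos 4) hS0pos]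

end

section
variable {η ρ : ℝ} (hη : -1 < η) (hρ : 0 < ρ)

include hη in
lemma SQ_lower (hρ' : (max 1 (1/(1+η)) + |η-1| + 3)^2 + 4 ≤ ρ) :
    (Real.sqrt ρ - (max 1 (1/(1+η)) + |η-1| + 3)) * (∑' k : ℕ, nuWeight η ρ k)
      ≤ ∑' k : ℕ, Real.sqrt (phi η k) * nuWeight η ρ k := by
  have habs : (0:ℝ) ≤ |η-1| := abs_nonneg _
  have hc1 : (1:ℝ) ≤ max 1 (1/(1+η)) := le_max_left _ _
  have hρpos : 0 < ρ := by nlinarith [sq_nonneg (max 1 (1/(1+η)) + |η-1| + 3)]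
  have htpos : 0 < Real.sqrt ρ := Real.sqrt_pos.mpr hρpos
  have ht2 : (Real.sqrt ρ)^2 = ρ := Real.sq_sqrt hρpos.le
  have hS0pos : 0 < ∑' k : ℕ, nuWeight η ρ k := Z_pos hη hρpos
  have hSP : ∑' k : ℕ, phi η k * nuWeight η ρ k = ρ * ∑' k : ℕ, nuWeight η ρ k := tsumA hη hρpos
  have hSP2 := SP2_le hη hρ'
  have hpt : ∀ k : ℕ, (3/(2*Real.sqrt ρ))*(phi η k * nuWeight η ρ k)
      - (1/(2*(Real.sqrt ρ)^3))*((phi η k)^2 * nuWeight η ρ k)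
      ≤ Real.sqrt (phi η k) * nuWeight η ρ k := by
    intro k
    have hw := (nuWeight_pos hη hρpos (η := η) (ρ := ρ) k).le
    have base := sqrt_cubic_lb (phi_nonneg hη k) htpos
    calc (3/(2*Real.sqrt ρ))*(phi η k * nuWeight η ρ k)
        - (1/(2*(Real.sqrt ρ)^3))*((phi η k)^2 * nuWeight η ρ k)
        = (3*(phi η k)/(2*Real.sqrt ρ) - (phi η k)^2/(2*(Real.sqrt ρ)^3)) * nuWeight η ρ k := by
          ring
      _ ≤ Real.sqrt (phi η k) * nuWeight η ρ k := mul_le_mul_of_nonneg_right base hw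
  have hsum1 : Summable (fun k : ℕ => (3/(2*Real.sqrt ρ))*(phi η k * nuWeight η ρ k)) :=
    (sumPhi hη hρpos).mul_left _
  have hsum2 : Summable (fun k : ℕ => (1/(2*(Real.sqrt ρ)^3))*((phi η k)^2 * nuWeight η ρ k)) :=
    (sumPhiSq hη hρpos).mul_left _
  have hmain : (3/(2*Real.sqrt ρ)) * ∑' k : ℕ, phi η k * nuWeight η ρ k
      - (1/(2*(Real.sqrt ρ)^3)) * ∑' k : ℕ, (phi η k)^2 * nuWeight η ρ k
      ≤ ∑' k : ℕ, Real.sqrt (phi η k) * nuWeight η ρ k := by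
    rw [← tsum_mul_left, ← tsum_mul_left, ← Summable.tsum_sub hsum1 hsum2]
    exact Summable.tsum_le_tsum hpt (hsum1.sub hsum2) (sumSqrtPhi hη hρpos)
  rw [hSP] at hmain
  set t := Real.sqrt ρ
  set B := max 1 (1/(1+η)) + |η-1| + 3
  set S0 := ∑' k : ℕ, nuWeight η ρ k
  set SP2 := ∑' k : ℕ, (phi η k)^2 * nuWeight η ρ k
  have h3 : (1/(2*t^3)) * SP2 ≤ (1/(2*t^3)) * (ρ^2 * S0 + B * (ρ * t) * S0) :=
    mul_le_mul_of_nonneg_left hSP2 (by positivity)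
  have hρt : ρ = t^2 := ht2.symm
  have hfin : (3/(2*t)) * (ρ * S0) - (1/(2*t^3)) * (ρ^2 * S0 + B * (ρ * t) * S0)
      = (t - B/2) * S0 := by
    rw [hρt]
    field_simp
    ring
  have hBnn : (0:ℝ) ≤ B := by positivity
  calc (t - B)*S0 ≤ (t - B/2) * S0 := by nlinarith [mul_nonneg hBnn hS0pos.le]
    _ = 3/(2*t)*(ρ*S0) - 1/(2*t^3)*(ρ^2*S0 + B*(ρ*t)*S0) := hfin.symm
    _ ≤ 3/(2*t)*(ρ*S0) - 1/(2*t^3)*SP2 := by linarith [h3]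
    _ ≤ ∑' k : ℕ, Real.sqrt (phi η k) * nuWeight η ρ k := hmain

include hη hρ in
lemma SQ_sq_le : (∑' k : ℕ, Real.sqrt (phi η k) * nuWeight η ρ k)^2
    ≤ ρ * (∑' k : ℕ, nuWeight η ρ k)^2 := by
  have hS0pos : 0 < ∑' k : ℕ, nuWeight η ρ k := Z_pos hη hρ
  set S0 := ∑' k : ℕ, nuWeight η ρ k with hS0def
  set SQ := ∑' k : ℕ, Real.sqrt (phi η k) * nuWeight η ρ k with hSQdef
  have h0 : 0 ≤ ∑' k : ℕ, (S0^2*(phi η k * nuWeight η ρ k)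
      - (2*S0*SQ)*(Real.sqrt (phi η k) * nuWeight η ρ k) + SQ^2*(nuWeight η ρ k)) := by
    apply tsum_nonneg
    intro k
    have hw := (nuWeight_pos hη hρ (η := η) (ρ := ρ) k).le
    have e : S0^2*(phi η k * nuWeight η ρ k)
        - (2*S0*SQ)*(Real.sqrt (phi η k) * nuWeight η ρ k) + SQ^2*(nuWeight η ρ k)
        = ((S0 * Real.sqrt (phi η k) - SQ)^2) * nuWeight η ρ k := by
      have hsq := Real.sq_sqrt (phi_nonneg hη k)
      linear_combination (-(S0^2 * nuWeight η ρ k)) * hsq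
    rw [e]
    positivity
  have hsplit : ∑' k : ℕ, (S0^2*(phi η k * nuWeight η ρ k)
      - (2*S0*SQ)*(Real.sqrt (phi η k) * nuWeight η ρ k) + SQ^2*(nuWeight η ρ k))
      = S0^2 * (∑' k : ℕ, phi η k * nuWeight η ρ k) - (2*S0*SQ) * SQ + SQ^2 * S0 := by
    rw [Summable.tsum_add (Summable.sub ((sumPhi hη hρ).mul_left _) ((sumSqrtPhi hη hρ).mul_left _))
        ((sumW hη hρ).mul_left _),
      Summable.tsum_sub ((sumPhi hη hρ).mul_left _) ((sumSqrtPhi hη hρ).mul_left _),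
      tsum_mul_left, tsum_mul_left, tsum_mul_left]
  rw [hsplit, tsumA hη hρ] at h0
  nlinarith [h0, hS0pos]

include hη in
lemma sqrt_phi_le (k : ℕ) : Real.sqrt (phi η k) ≤ (k:ℝ) + |η| := by
  have h1 : (0:ℝ) ≤ k := Nat.cast_nonneg k
  have h2 : η ≤ |η| := le_abs_self η
  have h3 : (0:ℝ) ≤ |η| := abs_nonneg η
  have hb : phi η k ≤ ((k:ℝ) + |η|)^2 := by
    unfold phi; nlinarith [mul_le_mul_of_nonneg_right h2 h1]
  calc Real.sqrt (phi η k) ≤ Real.sqrt (((k:ℝ) + |η|)^2) := Real.sqrt_le_sqrt hb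
    _ = (k:ℝ) + |η| := Real.sqrt_sq (by positivity)

include hη in
lemma le_sqrt_phi (k : ℕ) : (k:ℝ) - |η| ≤ Real.sqrt (phi η k) := by
  have h1 : (0:ℝ) ≤ k := Nat.cast_nonneg k
  have h2 : -|η| ≤ η := neg_abs_le η
  have h3 : (0:ℝ) ≤ |η| := abs_nonneg η
  rcases le_or_gt ((k:ℝ)) |η| with h | h
  · calc (k:ℝ) - |η| ≤ 0 := by linarith
      _ ≤ Real.sqrt (phi η k) := Real.sqrt_nonneg _
  · apply Real.le_sqrt_of_sq_le
    unfold phi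
    nlinarith [sq_abs η, mul_le_mul_of_nonneg_right h2 h1]

end

section
variable {η ρ : ℝ} (hη : -1 < η)

include hη in
lemma K1_lower (hρ' : (max 1 (1/(1+η)) + |η-1| + 3)^2 + 4 ≤ ρ) :
    (Real.sqrt ρ - ((max 1 (1/(1+η)) + |η-1| + 3) + |η|)) * (∑' k : ℕ, nuWeight η ρ k)
      ≤ ∑' k : ℕ, (k:ℝ) * nuWeight η ρ k := by
  have habs : (0:ℝ) ≤ |η-1| := abs_nonneg _
  have hc1 : (1:ℝ) ≤ max 1 (1/(1+η)) := le_max_left _ _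
  have hρpos : 0 < ρ := by nlinarith [sq_nonneg (max 1 (1/(1+η)) + |η-1| + 3)]
  have hS0pos : 0 < ∑' k : ℕ, nuWeight η ρ k := Z_pos hη hρpos
  have hSQ := SQ_lower hη hρ'
  have hpt : ∀ k : ℕ, Real.sqrt (phi η k) * nuWeight η ρ k - |η| * nuWeight η ρ k
      ≤ (k:ℝ) * nuWeight η ρ k := by
    intro k
    have hw := (nuWeight_pos hη hρpos (η := η) (ρ := ρ) k).le
    have h := sqrt_phi_le hη k
    nlinarith [h, hw]
  have hstep : ∑' k : ℕ, (Real.sqrt (phi η k) * nuWeight η ρ k - |η| * nuWeight η ρ k)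
      ≤ ∑' k : ℕ, (k:ℝ) * nuWeight η ρ k :=
    Summable.tsum_le_tsum hpt ((sumSqrtPhi hη hρpos).sub ((sumW hη hρpos).mul_left _)) (sumK hη hρpos)
  rw [Summable.tsum_sub (sumSqrtPhi hη hρpos) ((sumW hη hρpos).mul_left _), tsum_mul_left] at hstep
  have habsnn : (0:ℝ) ≤ |η| := abs_nonneg η
  nlinarith [hSQ, hstep]

include hη in
lemma K1_upper (hρpos : 0 < ρ) :
    ∑' k : ℕ, (k:ℝ) * nuWeight η ρ k
      ≤ (Real.sqrt ρ + |η|) * (∑' k : ℕ, nuWeight η ρ k) := by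
  have hS0pos : 0 < ∑' k : ℕ, nuWeight η ρ k := Z_pos hη hρpos
  have htnn : 0 ≤ Real.sqrt ρ := Real.sqrt_nonneg ρ
  have ht2 : (Real.sqrt ρ)^2 = ρ := Real.sq_sqrt hρpos.le
  have hSQnn : 0 ≤ ∑' k : ℕ, Real.sqrt (phi η k) * nuWeight η ρ k :=
    tsum_nonneg fun k => mul_nonneg (Real.sqrt_nonneg _) (nuWeight_pos hη hρpos k).le
  have hSQsq := SQ_sq_le hη hρpos
  have hSQ : ∑' k : ℕ, Real.sqrt (phi η k) * nuWeight η ρ k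
      ≤ Real.sqrt ρ * ∑' k : ℕ, nuWeight η ρ k := by
    nlinarith [hSQsq, hSQnn, mul_nonneg htnn hS0pos.le]
  have hpt : ∀ k : ℕ, (k:ℝ) * nuWeight η ρ k
      ≤ Real.sqrt (phi η k) * nuWeight η ρ k + |η| * nuWeight η ρ k := by
    intro k
    have hw := (nuWeight_pos hη hρpos (η := η) (ρ := ρ) k).le
    have h := le_sqrt_phi hη k
    nlinarith [h, hw]
  have hstep : ∑' k : ℕ, (k:ℝ) * nuWeight η ρ k
      ≤ ∑' k : ℕ, (Real.sqrt (phi η k) * nuWeight η ρ k + |η| * nuWeight η ρ k) :=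
    Summable.tsum_le_tsum hpt (sumK hη hρpos) ((sumSqrtPhi hη hρpos).add ((sumW hη hρpos).mul_left _))
  rw [Summable.tsum_add (sumSqrtPhi hη hρpos) ((sumW hη hρpos).mul_left _), tsum_mul_left] at hstep
  nlinarith [hSQ, hstep]

end

lemma sqrt_tendsto_atTop : Filter.Tendsto Real.sqrt Filter.atTop Filter.atTop := by
  rw [Filter.tendsto_atTop]
  intro b
  filter_upwards [Filter.eventually_ge_atTop ((max 0 b)^2)] with ρ hρ
  calc b ≤ max 0 b := le_max_right _ _
    _ = Real.sqrt ((max 0 b)^2) := (Real.sqrt_sq (le_max_left _ _)).symm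
    _ ≤ Real.sqrt ρ := Real.sqrt_le_sqrt hρ


/-- The mean of `ν_{ρ,η}` satisfies `E(A_ρ)/√ρ → 1` as `ρ → ∞`. -/
theorem nu_mean_asymptotics (η : ℝ) (hη : -1 < η) :
    Filter.Tendsto (fun ρ : ℝ => (∑' k : ℕ, (k : ℝ) * nuDist η ρ k) / Real.sqrt ρ)
      Filter.atTop (nhds 1) := by
  set B := max 1 (1/(1+η)) + |η-1| + 3 with hBdef
  set K := B + |η| with hKdef
  have hc1 : (1:ℝ) ≤ max 1 (1/(1+η)) := le_max_left _ _
  have habs : (0:ℝ) ≤ |η-1| := abs_nonneg _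
  have habsη : (0:ℝ) ≤ |η| := abs_nonneg _
  have hKnn : (0:ℝ) ≤ K := by rw [hKdef, hBdef]; positivity
  have hK0 : Filter.Tendsto (fun ρ : ℝ => K / Real.sqrt ρ) Filter.atTop (nhds 0) :=
    Filter.Tendsto.div_atTop tendsto_const_nhds sqrt_tendsto_atTop
  have hlow : Filter.Tendsto (fun ρ : ℝ => 1 - K / Real.sqrt ρ) Filter.atTop (nhds 1) := by
    have := tendsto_const_nhds (α := ℝ) (x := (1:ℝ)) (f := Filter.atTop (α := ℝ)) |>.sub hK0
    simpa using this
  have hhigh : Filter.Tendsto (fun ρ : ℝ => 1 + K / Real.sqrt ρ) Filter.atTop (nhds 1) := by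
    have := tendsto_const_nhds (α := ℝ) (x := (1:ℝ)) (f := Filter.atTop (α := ℝ)) |>.add hK0
    simpa using this
  apply tendsto_of_tendsto_of_tendsto_of_le_of_le' hlow hhigh
  · filter_upwards [Filter.eventually_ge_atTop (B^2 + 4)] with ρ hρ'
    have hρpos : 0 < ρ := by nlinarith [sq_nonneg B]
    have htpos : 0 < Real.sqrt ρ := Real.sqrt_pos.mpr hρpos
    have hS0pos : 0 < ∑' k : ℕ, nuWeight η ρ k := Z_pos hη hρpos
    have hmean : ∑' k : ℕ, (k:ℝ) * nuDist η ρ k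
        = (∑' k : ℕ, (k:ℝ) * nuWeight η ρ k) / (∑' k : ℕ, nuWeight η ρ k) := by
      simp only [nuDist, ← mul_div_assoc]
      exact tsum_div_const
    have hlower := K1_lower hη (ρ := ρ) hρ'
    have hmb : Real.sqrt ρ - K ≤ (∑' k : ℕ, (k:ℝ) * nuWeight η ρ k) / (∑' k : ℕ, nuWeight η ρ k) := by
      rw [le_div_iff₀ hS0pos]
      calc (Real.sqrt ρ - K) * (∑' k : ℕ, nuWeight η ρ k)
          = (Real.sqrt ρ - (B + |η|)) * (∑' k : ℕ, nuWeight η ρ k) := by rw [hKdef]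
        _ ≤ ∑' k : ℕ, (k:ℝ) * nuWeight η ρ k := hlower
    rw [hmean]
    have h1 : (Real.sqrt ρ - K) / Real.sqrt ρ
        ≤ ((∑' k : ℕ, (k:ℝ) * nuWeight η ρ k) / (∑' k : ℕ, nuWeight η ρ k)) / Real.sqrt ρ := by
      gcongr
    calc 1 - K / Real.sqrt ρ = (Real.sqrt ρ - K) / Real.sqrt ρ := by
          field_simp
      _ ≤ _ := h1
  · filter_upwards [Filter.eventually_ge_atTop (B^2 + 4)] with ρ hρ'
    have hρpos : 0 < ρ := by nlinarith [sq_nonneg B]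
    have htpos : 0 < Real.sqrt ρ := Real.sqrt_pos.mpr hρpos
    have hS0pos : 0 < ∑' k : ℕ, nuWeight η ρ k := Z_pos hη hρpos
    have hmean : ∑' k : ℕ, (k:ℝ) * nuDist η ρ k
        = (∑' k : ℕ, (k:ℝ) * nuWeight η ρ k) / (∑' k : ℕ, nuWeight η ρ k) := by
      simp only [nuDist, ← mul_div_assoc]
      exact tsum_div_const
    have hupper := K1_upper hη (ρ := ρ) hρpos
    have hmb : (∑' k : ℕ, (k:ℝ) * nuWeight η ρ k) / (∑' k : ℕ, nuWeight η ρ k)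
        ≤ Real.sqrt ρ + K := by
      rw [div_le_iff₀ hS0pos]
      calc ∑' k : ℕ, (k:ℝ) * nuWeight η ρ k
          ≤ (Real.sqrt ρ + |η|) * (∑' k : ℕ, nuWeight η ρ k) := hupper
        _ ≤ (Real.sqrt ρ + K) * (∑' k : ℕ, nuWeight η ρ k) := by
            have hBnn : (0:ℝ) ≤ B := by rw [hBdef]; positivity
            nlinarith [hS0pos]
    rw [hmean]
    have h1 : ((∑' k : ℕ, (k:ℝ) * nuWeight η ρ k) / (∑' k : ℕ, nuWeight η ρ k)) / Real.sqrt ρ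
        ≤ (Real.sqrt ρ + K) / Real.sqrt ρ := by
      gcongr
    calc _ ≤ (Real.sqrt ρ + K) / Real.sqrt ρ := h1
      _ = 1 + K / Real.sqrt ρ := by field_simp
end

section
/- Fix K₀ > 0 and η > -1. With a_ρ the positive root of a(η+a) = ρ, there exists a constant C such that for all sufficiently large ρ and all integers k with |k| ≤ K₀√(a_ρ): |Σ_{i=0}^k log(a_ρ(η+a_ρ)/((i+⌈a_ρ⌉)(η+⌈a_ρ⌉+i))) − ∫_0^k log(a_ρ(η+a_ρ)/((u+⌈a_ρ⌉)(η+⌈a_ρ⌉+u))) du| ≤ C/√(a_ρ). -/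
open scoped BigOperators

/-- The centering constant `a_ρ`, positive root of `a(η+a) = ρ`. -/
noncomputable def aRho (η ρ : ℝ) : ℝ := (Real.sqrt (η ^ 2 + 4 * ρ) - η) / 2

/-- The summand `log(a_ρ(η+a_ρ)/((u+⌈a_ρ⌉)(η+⌈a_ρ⌉+u)))`. -/
noncomputable def gLog (η ρ : ℝ) (u : ℝ) : ℝ :=
  Real.log (aRho η ρ * (η + aRho η ρ) /
    ((u + (⌈aRho η ρ⌉ : ℝ)) * (η + (⌈aRho η ρ⌉ : ℝ) + u)))

/-- The signed sum `Σ_{i=0}^k gLog(i)` for `k : ℤ`, with the usual convention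
`Σ_{i=0}^k = -Σ_{i=k+1}^{-1}` for negative `k`. -/
noncomputable def gSum (η ρ : ℝ) (k : ℤ) : ℝ :=
  if 0 ≤ k then ∑ i ∈ Finset.range (k.toNat + 1), gLog η ρ i
  else -∑ i ∈ Finset.range ((-k).toNat - 1), gLog η ρ (-(i + 1 : ℕ))

noncomputable def glog (η a u : ℝ) : ℝ :=
  Real.log (a * (η + a) / ((u + (⌈a⌉ : ℝ)) * (η + (⌈a⌉ : ℝ) + u)))

lemma abs_log_sub_log_le' {x y : ℝ} (hx : 0 < x) (hy : 0 < y) :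
    |Real.log x - Real.log y| ≤ |x - y| / min x y := by
  wlog h : y ≤ x generalizing x y
  · rw [abs_sub_comm, abs_sub_comm x y, min_comm]
    exact this hy hx (le_of_not_ge h)
  rw [abs_of_nonneg (sub_nonneg.2 (Real.log_le_log hy h)),
    abs_of_nonneg (sub_nonneg.2 h), min_eq_right h,
    ← Real.log_div hx.ne' hy.ne']
  have h2 : Real.log (x / y) ≤ x / y - 1 := Real.log_le_sub_one_of_pos (by positivity)
  have : x / y - 1 = (x - y) / y := by field_simp
  linarith [this ▸ h2]

set_option maxHeartbeats 1000000 in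
theorem key (η K₀ : ℝ) (hη : -1 < η) (hK₀ : 0 < K₀) (a : ℝ)
    (ha : (4 * K₀ + 8) ^ 2 + 5 ≤ a) (k : ℤ) (hk : |(k : ℝ)| ≤ K₀ * Real.sqrt a) :
    |(if 0 ≤ k then ∑ i ∈ Finset.range (k.toNat + 1), glog η a i
      else -∑ i ∈ Finset.range ((-k).toNat - 1), glog η a (-(i + 1 : ℕ)))
      - ∫ u in (0 : ℝ)..(k : ℝ), glog η a u| ≤ (16 * K₀ + 16) / Real.sqrt a := by
  set s := Real.sqrt a with hs_def
  set m : ℝ := (⌈a⌉ : ℝ) with hm_def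
  set L : ℝ := K₀ * s + 1 with hL_def
  have ha4 : (4 : ℝ) ≤ a := by nlinarith [sq_nonneg (4 * K₀ + 8)]
  have h0a : (0 : ℝ) < a := by linarith
  have hs0 : 0 < s := Real.sqrt_pos.2 h0a
  have hss : s * s = a := Real.mul_self_sqrt h0a.le
  have hs48 : 4 * K₀ + 8 ≤ s := by
    have h1 : (4 * K₀ + 8) = Real.sqrt ((4 * K₀ + 8) ^ 2) :=
      (Real.sqrt_sq (by positivity)).symm
    rw [h1, hs_def]
    exact Real.sqrt_le_sqrt (by linarith)
  have hs1 : (1 : ℝ) ≤ s := by linarith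
  have hL2 : L ≤ a / 2 := by
    have : (4 * K₀ + 8) * s ≤ s * s := by nlinarith
    rw [hL_def]; nlinarith
  have hma : a ≤ m := Int.le_ceil a
  have hm1 : m ≤ a + 1 := (Int.ceil_lt_add_one a).le
  have hL0 : 0 < L := by positivity
  -- positivity of factors
  have hpos : ∀ u : ℝ, |u| ≤ L → a / 4 ≤ u + m ∧ a / 4 ≤ η + m + u := by
    intro u hu
    have h1 : -L ≤ u := neg_le_of_abs_le hu
    constructor <;> nlinarith
  -- expansion of glog
  have hexp : ∀ u : ℝ, |u| ≤ L → glog η a u =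
      (Real.log a - Real.log (u + m)) + (Real.log (η + a) - Real.log (η + m + u)) := by
    intro u hu
    obtain ⟨h1, h2⟩ := hpos u hu
    have p1 : (0 : ℝ) < u + m := by linarith
    have p2 : (0 : ℝ) < η + m + u := by linarith
    have p3 : (0 : ℝ) < η + a := by linarith
    rw [glog, Real.log_div (by positivity) (by positivity),
      Real.log_mul h0a.ne' p3.ne', Real.log_mul p1.ne' p2.ne']
    ring
  -- pointwise bound
  have hgb : ∀ u : ℝ, |u| ≤ L → |glog η a u| ≤ 8 * (K₀ + 2) / s := by
    intro u hu
    obtain ⟨h1, h2⟩ := hpos u hu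
    have p1 : (0 : ℝ) < u + m := by linarith
    have p2 : (0 : ℝ) < η + m + u := by linarith
    have p3 : (0 : ℝ) < η + a := by linarith
    have hu1 : -L ≤ u := neg_le_of_abs_le hu
    have hu2 : u ≤ L := le_of_abs_le hu
    have b1 : |Real.log a - Real.log (u + m)| ≤ (L + 1) / (a / 4) := by
      refine (abs_log_sub_log_le' h0a p1).trans ?_
      apply div_le_div₀ (by positivity) ?_ (by positivity) (le_min (by linarith) h1)
      rw [abs_le]; constructor <;> nlinarith
    have b2 : |Real.log (η + a) - Real.log (η + m + u)| ≤ (L + 1) / (a / 4) := by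
      refine (abs_log_sub_log_le' p3 p2).trans ?_
      apply div_le_div₀ (by positivity) ?_ (by positivity) (le_min (by linarith) h2)
      rw [abs_le]; constructor <;> nlinarith
    have b3 : (L + 1) / (a / 4) ≤ 4 * (K₀ + 2) / s := by
      rw [div_le_div_iff₀ (by positivity) hs0]
      calc (L + 1) * s = K₀ * (s * s) + 2 * s := by rw [hL_def]; ring
        _ ≤ K₀ * (s * s) + 2 * (s * s) := by nlinarith
        _ = 4 * (K₀ + 2) * (s * s / 4) := by ring
        _ = 4 * (K₀ + 2) * (a / 4) := by rw [hss]
    rw [hexp u hu]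
    calc |(Real.log a - Real.log (u + m)) + (Real.log (η + a) - Real.log (η + m + u))|
        ≤ |Real.log a - Real.log (u + m)| + |Real.log (η + a) - Real.log (η + m + u)| :=
          abs_add_le _ _
      _ ≤ (L + 1) / (a / 4) + (L + 1) / (a / 4) := add_le_add b1 b2
      _ ≤ 4 * (K₀ + 2) / s + 4 * (K₀ + 2) / s := add_le_add b3 b3
      _ = 8 * (K₀ + 2) / s := by ring
  -- per-interval difference bound
  have hdiff : ∀ x u : ℝ, -L ≤ x → x + 1 ≤ L → x ≤ u → u ≤ x + 1 →
      |glog η a x - glog η a u| ≤ 8 / a := by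
    intro x u h1 h2 h3 h4
    have hxL : |x| ≤ L := abs_le.2 ⟨h1, by linarith⟩
    have huL : |u| ≤ L := abs_le.2 ⟨by linarith, by linarith⟩
    obtain ⟨q1, q2⟩ := hpos x hxL
    obtain ⟨q3, q4⟩ := hpos u huL
    have p1 : (0:ℝ) < x + m := by linarith
    have p2 : (0:ℝ) < η + m + x := by linarith
    have p3 : (0:ℝ) < u + m := by linarith
    have p4 : (0:ℝ) < η + m + u := by linarith
    have c1 : |Real.log (u + m) - Real.log (x + m)| ≤ 4 / a := by
      refine (abs_log_sub_log_le' p3 p1).trans ?_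
      have hn : |u + m - (x + m)| ≤ 1 := by rw [abs_le]; constructor <;> linarith
      calc |u + m - (x + m)| / min (u + m) (x + m) ≤ 1 / (a / 4) :=
            div_le_div₀ (by norm_num) hn (by positivity) (le_min q3 q1)
        _ = 4 / a := by rw [one_div_div]
    have c2 : |Real.log (η + m + u) - Real.log (η + m + x)| ≤ 4 / a := by
      refine (abs_log_sub_log_le' p4 p2).trans ?_
      have hn : |η + m + u - (η + m + x)| ≤ 1 := by rw [abs_le]; constructor <;> linarith
      calc |η + m + u - (η + m + x)| / min (η + m + u) (η + m + x) ≤ 1 / (a / 4) :=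
            div_le_div₀ (by norm_num) hn (by positivity) (le_min q4 q2)
        _ = 4 / a := by rw [one_div_div]
    rw [hexp x hxL, hexp u huL]
    have e : (Real.log a - Real.log (x + m)) + (Real.log (η + a) - Real.log (η + m + x))
        - ((Real.log a - Real.log (u + m)) + (Real.log (η + a) - Real.log (η + m + u)))
        = (Real.log (u + m) - Real.log (x + m)) + (Real.log (η + m + u) - Real.log (η + m + x)) := by
      ring
    rw [e]
    calc |(Real.log (u + m) - Real.log (x + m)) + (Real.log (η + m + u) - Real.log (η + m + x))|
        ≤ |Real.log (u + m) - Real.log (x + m)| + |Real.log (η + m + u) - Real.log (η + m + x)| :=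
          abs_add_le _ _
      _ ≤ 4 / a + 4 / a := add_le_add c1 c2
      _ = 8 / a := by ring
  -- continuity and integrability
  have hcont : ContinuousOn (glog η a) (Set.Icc (-L) L) := by
    unfold glog
    apply ContinuousOn.log
    · apply ContinuousOn.div continuousOn_const
      · fun_prop
      · intro u hu
        obtain ⟨q1, q2⟩ := hpos u (abs_le.2 ⟨hu.1, hu.2⟩)
        exact (mul_pos (by linarith : (0:ℝ) < u + m) (by linarith : (0:ℝ) < η + m + u)).ne'
    · intro u hu
      obtain ⟨q1, q2⟩ := hpos u (abs_le.2 ⟨hu.1, hu.2⟩)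
      have p3 : (0:ℝ) < η + a := by linarith
      exact (div_pos (mul_pos h0a p3)
        (mul_pos (by linarith : (0:ℝ) < u + m) (by linarith : (0:ℝ) < η + m + u))).ne'
  have hInt : ∀ x y : ℝ, -L ≤ x → y ≤ L → x ≤ y →
      IntervalIntegrable (glog η a) MeasureTheory.volume x y := by
    intro x y h1 h2 h3
    exact (hcont.mono (by rw [Set.uIcc_of_le h3]; exact Set.Icc_subset_Icc h1 h2)).intervalIntegrable
  -- per-interval error bound
  have hIE : ∀ x : ℝ, -L ≤ x → x + 1 ≤ L →
      |glog η a x - ∫ u in x..(x + 1), glog η a u| ≤ 8 / a := by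
    intro x h1 h2
    have hi : IntervalIntegrable (glog η a) MeasureTheory.volume x (x + 1) :=
      hInt x (x + 1) h1 h2 (by linarith)
    have e1 : glog η a x - ∫ u in x..(x + 1), glog η a u
        = ∫ u in x..(x + 1), (glog η a x - glog η a u) := by
      rw [intervalIntegral.integral_sub intervalIntegrable_const hi,
        intervalIntegral.integral_const]
      simp
    rw [e1]
    have hb := intervalIntegral.norm_integral_le_of_norm_le_const
      (C := 8 / a) (f := fun u => glog η a x - glog η a u) (a := x) (b := x + 1) ?_
    · rw [Real.norm_eq_abs] at hb
      simpa using hb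
    · intro u hu
      rw [Set.uIoc_of_le (by linarith : x ≤ x + 1)] at hu
      rw [Real.norm_eq_abs]
      exact hdiff x u h1 h2 hu.1.le hu.2
  -- boundary integral bound
  have hBI : ∀ x : ℝ, -L ≤ x → x + 1 ≤ L →
      |∫ u in x..(x + 1), glog η a u| ≤ 8 * (K₀ + 2) / s := by
    intro x h1 h2
    have hb := intervalIntegral.norm_integral_le_of_norm_le_const
      (C := 8 * (K₀ + 2) / s) (f := glog η a) (a := x) (b := x + 1) ?_
    · rw [Real.norm_eq_abs] at hb
      simpa using hb
    · intro u hu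
      rw [Set.uIoc_of_le (by linarith : x ≤ x + 1)] at hu
      rw [Real.norm_eq_abs]
      exact hgb u (abs_le.2 ⟨by linarith [hu.1], by linarith [hu.2]⟩)
  rcases le_or_gt 0 k with hk0 | hk0
  · rw [if_pos hk0]
    set K := k.toNat with hK_def
    have hKr : ((K : ℕ) : ℝ) = (k : ℝ) := by
      rw [hK_def]; exact_mod_cast Int.toNat_of_nonneg hk0
    have hKs : (K : ℝ) ≤ K₀ * s := by rw [hKr]; exact (le_abs_self _).trans hk
    have hadj := intervalIntegral.sum_integral_adjacent_intervals
        (a := fun i : ℕ => (i:ℝ)) (μ := MeasureTheory.volume) (f := glog η a) (n := K)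
        (by intro i hi
            apply hInt
            · linarith [Nat.cast_nonneg (α := ℝ) i]
            · have h1 : ((i:ℕ):ℝ) + 1 ≤ (K : ℝ) := by exact_mod_cast Nat.succ_le_of_lt hi
              push_cast at h1 ⊢
              linarith
            · push_cast; linarith [Nat.cast_nonneg (α := ℝ) i])
    simp only [Nat.cast_zero, Nat.cast_add, Nat.cast_one] at hadj
    have htel : ∫ u in (0:ℝ)..(k:ℝ), glog η a u
        = ∑ i ∈ Finset.range K, ∫ u in (i:ℝ)..((i:ℝ)+1), glog η a u := by
      rw [← hKr, ← hadj]
    rw [htel, Finset.sum_range_succ]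
    have e2 : (∑ i ∈ Finset.range K, glog η a i + glog η a K)
        - ∑ i ∈ Finset.range K, ∫ u in (i:ℝ)..((i:ℝ)+1), glog η a u
        = (∑ i ∈ Finset.range K, (glog η a i - ∫ u in (i:ℝ)..((i:ℝ)+1), glog η a u))
          + glog η a K := by
      rw [Finset.sum_sub_distrib]; ring
    rw [e2]
    have hterm : ∀ i ∈ Finset.range K,
        |glog η a i - ∫ u in (i:ℝ)..((i:ℝ)+1), glog η a u| ≤ 8 / a := by
      intro i hi
      apply hIE
      · linarith [Nat.cast_nonneg (α := ℝ) i]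
      · have h1 : ((i:ℕ):ℝ) + 1 ≤ (K : ℝ) := by
          exact_mod_cast Nat.succ_le_of_lt (Finset.mem_range.1 hi)
        linarith
    have hsum : |∑ i ∈ Finset.range K, (glog η a i - ∫ u in (i:ℝ)..((i:ℝ)+1), glog η a u)|
        ≤ (K : ℝ) * (8 / a) := by
      calc |∑ i ∈ Finset.range K, (glog η a i - ∫ u in (i:ℝ)..((i:ℝ)+1), glog η a u)|
          ≤ ∑ i ∈ Finset.range K, |glog η a i - ∫ u in (i:ℝ)..((i:ℝ)+1), glog η a u| :=
            Finset.abs_sum_le_sum_abs _ _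
        _ ≤ ∑ _i ∈ Finset.range K, (8 / a) := Finset.sum_le_sum hterm
        _ = (K : ℝ) * (8 / a) := by
            rw [Finset.sum_const, Finset.card_range, nsmul_eq_mul]
    have hlast : |glog η a K| ≤ 8 * (K₀ + 2) / s :=
      hgb _ (abs_le.2 ⟨by linarith [Nat.cast_nonneg (α := ℝ) K], by linarith⟩)
    have hKa : (K : ℝ) * (8 / a) ≤ 8 * K₀ / s := by
      rw [← hss]
      calc (K : ℝ) * (8 / (s * s)) ≤ (K₀ * s) * (8 / (s * s)) := by
            have : (0:ℝ) ≤ 8 / (s * s) := by positivity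
            exact mul_le_mul_of_nonneg_right hKs this
        _ = 8 * K₀ / s := by field_simp
    calc |(∑ i ∈ Finset.range K, (glog η a i - ∫ u in (i:ℝ)..((i:ℝ)+1), glog η a u))
          + glog η a K|
        ≤ |∑ i ∈ Finset.range K, (glog η a i - ∫ u in (i:ℝ)..((i:ℝ)+1), glog η a u)|
          + |glog η a K| := abs_add_le _ _
      _ ≤ (K : ℝ) * (8 / a) + 8 * (K₀ + 2) / s := add_le_add hsum hlast
      _ ≤ 8 * K₀ / s + 8 * (K₀ + 2) / s := by linarith
      _ = (16 * K₀ + 16) / s := by field_simp; ring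
  · rw [if_neg (not_le.2 hk0)]
    set n := (-k).toNat with hn_def
    have hn : ((n : ℕ) : ℝ) = -(k : ℝ) := by
      have h : ((-k).toNat : ℤ) = -k := Int.toNat_of_nonneg (by omega)
      rw [hn_def]; exact_mod_cast h
    have hn1 : 1 ≤ n := by omega
    have hkneg : (k : ℝ) < 0 := by exact_mod_cast hk0
    have hns : (n : ℝ) ≤ K₀ * s := by
      rw [hn]
      rw [abs_of_nonpos hkneg.le] at hk
      exact hk
    have hkL : -(K₀ * s) ≤ (k : ℝ) := neg_le_of_abs_le hk
    have hadj := intervalIntegral.sum_integral_adjacent_intervals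
        (a := fun i : ℕ => (k : ℝ) + i) (μ := MeasureTheory.volume) (f := glog η a) (n := n)
        (by intro i hi
            apply hInt
            · show -L ≤ (k:ℝ) + (i:ℕ)
              linarith [Nat.cast_nonneg (α := ℝ) i]
            · show (k:ℝ) + ((i+1:ℕ):ℝ) ≤ L
              have h1 : ((i : ℕ) : ℝ) + 1 ≤ (n : ℝ) := by exact_mod_cast Nat.succ_le_of_lt hi
              push_cast
              linarith
            · show (k:ℝ) + (i:ℕ) ≤ (k:ℝ) + ((i+1:ℕ):ℝ)
              push_cast; linarith)
    simp only [Nat.cast_zero, Nat.cast_add, Nat.cast_one, add_zero] at hadj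
    have hassoc : ∀ x : ℝ, (k:ℝ) + (x + 1) = (k:ℝ) + x + 1 := fun x => by ring
    simp only [hassoc] at hadj
    rw [show (k : ℝ) + (n : ℝ) = 0 by rw [hn]; ring] at hadj
    have hsym : ∫ u in (0:ℝ)..(k:ℝ), glog η a u = -∫ u in (k:ℝ)..(0:ℝ), glog η a u :=
      intervalIntegral.integral_symm _ _
    set G : ℕ → ℝ := fun j => ∫ u in (-(j:ℝ)-1)..((-(j:ℝ)-1)+1), glog η a u with hG_def
    have hrefl : ∑ i ∈ Finset.range n, ∫ u in ((k:ℝ)+i)..((k:ℝ)+i+1), glog η a u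
        = ∑ j ∈ Finset.range n, G j := by
      rw [← Finset.sum_range_reflect (fun j => G j) n]
      apply Finset.sum_congr rfl
      intro j hj
      have hj' : j < n := Finset.mem_range.1 hj
      have hc : ((n - 1 - j : ℕ) : ℝ) = (n : ℝ) - 1 - j := by
        have h2 : n - 1 - j = n - (1 + j) := by omega
        rw [h2, Nat.cast_sub (by omega)]
        push_cast; ring
      simp only [hG_def]
      have e1 : -(((n - 1 - j : ℕ) : ℝ)) - 1 = (k : ℝ) + j := by rw [hc]; linarith
      rw [e1]
    have hsplit : ∑ j ∈ Finset.range n, G j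
        = (∑ j ∈ Finset.range (n - 1), G j) + G (n - 1) := by
      have h : n = n - 1 + 1 := by omega
      conv_lhs => rw [h]
      rw [Finset.sum_range_succ]
    have hGn : G (n - 1) = ∫ u in (k:ℝ)..((k:ℝ)+1), glog η a u := by
      simp only [hG_def]
      have hc : ((n - 1 : ℕ) : ℝ) = (n : ℝ) - 1 := by
        rw [Nat.cast_sub hn1]; norm_num
      have e1 : -(((n - 1 : ℕ) : ℝ)) - 1 = (k : ℝ) := by rw [hc]; linarith
      rw [e1]
    have hint0k : ∫ u in (0:ℝ)..(k:ℝ), glog η a u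
        = -((∑ j ∈ Finset.range (n - 1), G j) + G (n - 1)) := by
      rw [hsym, ← hadj, hrefl, hsplit]
    rw [hint0k]
    have e3 : -(∑ i ∈ Finset.range (n - 1), glog η a (-(i + 1 : ℕ)))
        - (-((∑ j ∈ Finset.range (n - 1), G j) + G (n - 1)))
        = (∑ j ∈ Finset.range (n - 1), (G j - glog η a (-(j + 1 : ℕ)))) + G (n - 1) := by
      rw [Finset.sum_sub_distrib]; ring
    rw [e3]
    have hterm : ∀ j ∈ Finset.range (n - 1),
        |G j - glog η a (-(j + 1 : ℕ))| ≤ 8 / a := by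
      intro j hj
      have hj' : j < n - 1 := Finset.mem_range.1 hj
      have hcast : (-((j + 1 : ℕ) : ℝ)) = -(j:ℝ) - 1 := by push_cast; ring
      have hjn : (j : ℝ) + 1 ≤ (n : ℝ) := by exact_mod_cast (by omega : j + 1 ≤ n)
      have hx1 : -L ≤ -(j:ℝ) - 1 := by linarith
      have hx2 : (-(j:ℝ) - 1) + 1 ≤ L := by linarith [Nat.cast_nonneg (α := ℝ) j]
      rw [hcast, abs_sub_comm]
      exact hIE (-(j:ℝ) - 1) hx1 hx2
    have hsum : |∑ j ∈ Finset.range (n - 1), (G j - glog η a (-(j + 1 : ℕ)))|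
        ≤ ((n - 1 : ℕ) : ℝ) * (8 / a) := by
      calc |∑ j ∈ Finset.range (n - 1), (G j - glog η a (-(j + 1 : ℕ)))|
          ≤ ∑ j ∈ Finset.range (n - 1), |G j - glog η a (-(j + 1 : ℕ))| :=
            Finset.abs_sum_le_sum_abs _ _
        _ ≤ ∑ _j ∈ Finset.range (n - 1), (8 / a) := Finset.sum_le_sum hterm
        _ = ((n - 1 : ℕ) : ℝ) * (8 / a) := by
            rw [Finset.sum_const, Finset.card_range, nsmul_eq_mul]
    have hlast : |G (n - 1)| ≤ 8 * (K₀ + 2) / s := by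
      rw [hGn]
      exact hBI (k : ℝ) (by linarith) (by linarith)
    have hcount : ((n - 1 : ℕ) : ℝ) ≤ K₀ * s := by
      refine le_trans ?_ hns
      exact_mod_cast Nat.sub_le n 1
    have hKa : ((n - 1 : ℕ) : ℝ) * (8 / a) ≤ 8 * K₀ / s := by
      rw [← hss]
      calc ((n - 1 : ℕ) : ℝ) * (8 / (s * s)) ≤ (K₀ * s) * (8 / (s * s)) := by
            have h8 : (0:ℝ) ≤ 8 / (s * s) := by positivity
            exact mul_le_mul_of_nonneg_right hcount h8
        _ = 8 * K₀ / s := by field_simp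
    calc |(∑ j ∈ Finset.range (n - 1), (G j - glog η a (-(j + 1 : ℕ)))) + G (n - 1)|
        ≤ |∑ j ∈ Finset.range (n - 1), (G j - glog η a (-(j + 1 : ℕ)))| + |G (n - 1)| :=
          abs_add_le _ _
      _ ≤ ((n - 1 : ℕ) : ℝ) * (8 / a) + 8 * (K₀ + 2) / s := add_le_add hsum hlast
      _ ≤ 8 * K₀ / s + 8 * (K₀ + 2) / s := by linarith
      _ = (16 * K₀ + 16) / s := by field_simp; ring

/-- Riemann-sum approximation: uniformly for `|k| ≤ K₀√a_ρ`, the sum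
`Σ_{i=0}^k gLog(i)` equals the integral `∫_0^k gLog(u) du` up to `O(1/√a_ρ)`. -/
theorem sum_integral_approximation (η K₀ : ℝ) (hη : -1 < η) (hK₀ : 0 < K₀) :
    ∃ C : ℝ, ∃ R : ℝ, ∀ ρ : ℝ, R ≤ ρ → ∀ k : ℤ,
      |(k : ℝ)| ≤ K₀ * Real.sqrt (aRho η ρ) →
      |gSum η ρ k - ∫ u in (0 : ℝ)..(k : ℝ), gLog η ρ u| ≤
        C / Real.sqrt (aRho η ρ) := by
  refine ⟨16 * K₀ + 16, ((4 * K₀ + 8) ^ 2 + 5 + |η|) ^ 2, fun ρ hρ k hk => ?_⟩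
  have ha : (4 * K₀ + 8) ^ 2 + 5 ≤ aRho η ρ := by
    have hρ0 : 0 ≤ ρ := le_trans (by positivity) hρ
    have h1 : Real.sqrt (4 * ρ) ≤ Real.sqrt (η ^ 2 + 4 * ρ) :=
      Real.sqrt_le_sqrt (by nlinarith [sq_nonneg η])
    have h2 : Real.sqrt (4 * ρ) = 2 * Real.sqrt ρ := by
      rw [show (4 : ℝ) * ρ = (2 : ℝ) ^ 2 * ρ by ring, Real.sqrt_mul (by positivity),
        Real.sqrt_sq (by norm_num)]
    rw [h2] at h1
    have h3 : ((4 * K₀ + 8) ^ 2 + 5) + |η| ≤ Real.sqrt ρ := by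
      have h := Real.sqrt_le_sqrt hρ
      rwa [Real.sqrt_sq (by positivity)] at h
    have h4 := le_abs_self η
    have h5 := abs_nonneg η
    show (4 * K₀ + 8) ^ 2 + 5 ≤ (Real.sqrt (η ^ 2 + 4 * ρ) - η) / 2
    linarith
  exact key η K₀ hη hK₀ (aRho η ρ) ha k hk
end

section
/- Fix η > -1 and K₀ > 0, and let a_ρ be the positive root of a(η+a)=ρ. Then uniformly for u in any fixed compact interval, √(a_ρ)·log( a_ρ(η+a_ρ) / ((u√(a_ρ)+⌈a_ρ⌉)(η+⌈a_ρ⌉+u√(a_ρ))) ) = −2u + O(1/√(a_ρ)) as ρ → ∞. -/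
/-- The centering constant `a_ρ`, positive root of `a(η+a) = ρ`. -/

lemma log_est {t : ℝ} (h : -(1/2:ℝ) ≤ t) : |Real.log (1+t) - t| ≤ 2*t^2 := by
  have h1 : (0:ℝ) < 1 + t := by linarith
  have hub := Real.log_le_sub_one_of_pos h1
  have hlb := Real.log_le_sub_one_of_pos (inv_pos.2 h1)
  rw [Real.log_inv] at hlb
  have hinv : (1+t) * (1+t)⁻¹ = 1 := mul_inv_cancel₀ h1.ne'
  rw [abs_le]
  constructor
  · nlinarith [mul_nonneg (sq_nonneg t) (by linarith : (0:ℝ) ≤ 1+2*t)]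
  · nlinarith [sq_nonneg t]

set_option maxHeartbeats 1000000 in
lemma core_est (η K a u δ : ℝ) (hη : -1 < η) (hK : 0 < K)
    (hu : |u| ≤ K) (hδ0 : 0 ≤ δ) (hδ1 : δ ≤ 1)
    (ha : max 4 (max (16*(K+1)^2) ((2+2*K*|η|)^2)) ≤ a) :
    |Real.sqrt a * Real.log (a*(η+a)/((u*Real.sqrt a + (a+δ))*(η+(a+δ)+u*Real.sqrt a))) + 2*u|
      ≤ (10*(K+1)^2 + 3 + 2*K*|η|) / Real.sqrt a := by
  have hA4 : (4:ℝ) ≤ a := le_trans (le_max_left _ _) ha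
  have hAK : 16*(K+1)^2 ≤ a := le_trans (le_trans (le_max_left _ _) (le_max_right _ _)) ha
  have hAη : (2+2*K*|η|)^2 ≤ a := le_trans (le_trans (le_max_right _ _) (le_max_right _ _)) ha
  have ha0 : (0:ℝ) < a := by linarith
  set s := Real.sqrt a with hsdef
  have hs0 : 0 < s := Real.sqrt_pos.2 ha0
  have hs2 : s * s = a := Real.mul_self_sqrt ha0.le
  have hs_ge2 : 2 ≤ s := by
    have : Real.sqrt 4 ≤ s := Real.sqrt_le_sqrt hA4
    rwa [show (4:ℝ) = 2^2 by norm_num, Real.sqrt_sq (by norm_num)] at this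
  have hsK : 4*(K+1) ≤ s := by
    have : Real.sqrt (16*(K+1)^2) ≤ s := Real.sqrt_le_sqrt hAK
    rwa [show (16:ℝ)*(K+1)^2 = (4*(K+1))^2 by ring, Real.sqrt_sq (by positivity)] at this
  have hsη : 2+2*K*|η| ≤ s := by
    have : Real.sqrt ((2+2*K*|η|)^2) ≤ s := Real.sqrt_le_sqrt hAη
    rwa [Real.sqrt_sq (by positivity)] at this
  have hηa0 : 0 < η + a := by linarith
  have hηa : a/2 ≤ η + a := by linarith
  set x := (u*s+δ)/a with hxdef
  set y := (u*s+δ)/(η+a) with hydef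
  clear_value s x y
  have habs : |u*s+δ| ≤ (K+1)*s := by
    calc |u*s+δ| ≤ |u*s| + |δ| := abs_add_le _ _
    _ ≤ K*s + 1 := by
        rw [abs_mul, abs_of_pos hs0, abs_of_nonneg hδ0]
        have := mul_le_mul_of_nonneg_right hu hs0.le
        linarith
    _ ≤ (K+1)*s := by nlinarith
  have hx : |x| ≤ (K+1)/s := by
    rw [hxdef, abs_div, abs_of_pos ha0, div_le_div_iff₀ ha0 hs0]
    nlinarith
  have hy : |y| ≤ 2*(K+1)/s := by
    rw [hydef, abs_div, abs_of_pos hηa0, div_le_div_iff₀ hηa0 hs0]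
    nlinarith
  have hx2 : |x| ≤ 1/2 := by
    refine hx.trans ?_
    rw [div_le_div_iff₀ hs0 two_pos]; nlinarith
  have hy2 : |y| ≤ 1/2 := by
    refine hy.trans ?_
    rw [div_le_div_iff₀ hs0 two_pos]; nlinarith
  have h1x : (0:ℝ) < 1 + x := by have := abs_le.1 hx2; linarith [this.1]
  have h1y : (0:ℝ) < 1 + y := by have := abs_le.1 hy2; linarith [this.1]
  have hax : u*s + (a+δ) = a*(1+x) := by rw [hxdef]; field_simp; ring
  have hay : η+(a+δ)+u*s = (η+a)*(1+y) := by rw [hydef]; field_simp; ring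
  have harg : a*(η+a)/((u*s + (a+δ))*(η+(a+δ)+u*s)) = ((1+x)*(1+y))⁻¹ := by
    rw [hax, hay]
    field_simp
  have hlog : Real.log (a*(η+a)/((u*s + (a+δ))*(η+(a+δ)+u*s)))
      = -(Real.log (1+x)) - Real.log (1+y) := by
    rw [harg, Real.log_inv, Real.log_mul h1x.ne' h1y.ne']
    ring
  have hlx := log_est (t := x) (by linarith [(abs_le.1 hx2).1])
  have hly := log_est (t := y) (by linarith [(abs_le.1 hy2).1])
  have hxs : s * x = u + δ / s := by
    rw [hxdef, ← hs2]; field_simp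
  have hys : s * y - u = (δ*s - u*η)/(η+a) := by
    rw [hydef]; field_simp; linear_combination u * hs2
  have hx' : |x| * s ≤ K+1 := by rwa [le_div_iff₀ hs0] at hx
  have hy' : |y| * s ≤ 2*(K+1) := by rwa [le_div_iff₀ hs0] at hy
  have e1 : |u - s * Real.log (1+x)| ≤ (2*(K+1)^2 + 1)/s := by
    have h1 : u - s * Real.log (1+x) = (u - s*x) - s*(Real.log (1+x) - x) := by ring
    have h2 : |u - s*x| ≤ 1/s := by
      rw [hxs, show u - (u + δ/s) = -(δ/s) by ring, abs_neg, abs_div,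
        abs_of_pos hs0, abs_of_nonneg hδ0]
      gcongr
    have h3 : |s*(Real.log (1+x) - x)| ≤ 2*(K+1)^2/s := by
      rw [abs_mul, abs_of_pos hs0]
      calc s * |Real.log (1+x) - x| ≤ s * (2*x^2) :=
            mul_le_mul_of_nonneg_left hlx hs0.le
        _ ≤ 2*(K+1)^2/s := by
            rw [div_eq_mul_inv, ← sq_abs x]
            rw [show s * (2*|x|^2) = 2*((|x| * s) * |x|) by ring]
            have h4 : (|x| * s) * |x| ≤ (K+1)*((K+1)*s⁻¹) := by
              apply mul_le_mul hx' _ (abs_nonneg x) (by positivity)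
              rwa [← div_eq_mul_inv]
            calc 2*((|x| * s) * |x|) ≤ 2*((K+1)*((K+1)*s⁻¹)) := by linarith
              _ = 2*(K+1)^2*s⁻¹ := by ring
    calc |u - s * Real.log (1+x)| ≤ |u - s*x| + |s*(Real.log (1+x) - x)| := by
          rw [h1, sub_eq_add_neg]
          refine (abs_add_le _ _).trans ?_
          rw [abs_neg]
      _ ≤ 1/s + 2*(K+1)^2/s := add_le_add h2 h3
      _ = (2*(K+1)^2 + 1)/s := by ring
  have e2 : |u - s * Real.log (1+y)| ≤ (8*(K+1)^2 + 2 + 2*K*|η|)/s := by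
    have h1 : u - s * Real.log (1+y) = (u - s*y) - s*(Real.log (1+y) - y) := by ring
    have h2 : |u - s*y| ≤ (2 + 2*K*|η|)/s := by
      rw [show u - s*y = -(s*y - u) by ring, abs_neg, hys, abs_div, abs_of_pos hηa0,
        div_le_div_iff₀ hηa0 hs0]
      have hb : |δ*s - u*η| ≤ s + K*|η| := by
        have h5 : |δ*s - u*η| ≤ |δ*s| + |u*η| := by
          rw [sub_eq_add_neg]
          refine (abs_add_le _ _).trans ?_
          rw [abs_neg]
        rw [abs_mul, abs_mul, abs_of_nonneg hδ0, abs_of_pos hs0] at h5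
        have h6 := mul_le_mul_of_nonneg_right hu (abs_nonneg η)
        have h7 := mul_le_mul_of_nonneg_right hδ1 hs0.le
        linarith
      -- goal: |δ*s - u*η| * s ≤ (2 + 2*K*|η|) * (η + a)
      have hKη : 0 ≤ K*|η| := by positivity
      have hc : |δ*s - u*η| * s ≤ (s + K*|η|)*s := mul_le_mul_of_nonneg_right hb hs0.le
      have he : (s + K*|η|)*s ≤ (1 + K*|η|)*(s*s) := by
        nlinarith [mul_nonneg hKη (by nlinarith : (0:ℝ) ≤ s*s - s)]
      have hf : (1 + K*|η|)*(s*s) ≤ (2 + 2*K*|η|)*(η+a) := by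
        rw [hs2]
        nlinarith [mul_le_mul_of_nonneg_left hηa (by linarith : (0:ℝ) ≤ 2+2*K*|η|)]
      linarith
    have h3 : |s*(Real.log (1+y) - y)| ≤ 8*(K+1)^2/s := by
      rw [abs_mul, abs_of_pos hs0]
      calc s * |Real.log (1+y) - y| ≤ s * (2*y^2) :=
            mul_le_mul_of_nonneg_left hly hs0.le
        _ ≤ 8*(K+1)^2/s := by
            rw [div_eq_mul_inv, ← sq_abs y]
            rw [show s * (2*|y|^2) = 2*((|y| * s) * |y|) by ring]
            have h4 : (|y| * s) * |y| ≤ (2*(K+1))*(2*(K+1)*s⁻¹) := by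
              apply mul_le_mul hy' _ (abs_nonneg y) (by positivity)
              rwa [← div_eq_mul_inv]
            calc 2*((|y| * s) * |y|) ≤ 2*((2*(K+1))*(2*(K+1)*s⁻¹)) := by linarith
              _ = 8*(K+1)^2*s⁻¹ := by ring
    calc |u - s * Real.log (1+y)| ≤ |u - s*y| + |s*(Real.log (1+y) - y)| := by
          rw [h1, sub_eq_add_neg]
          refine (abs_add_le _ _).trans ?_
          rw [abs_neg]
      _ ≤ (2 + 2*K*|η|)/s + 8*(K+1)^2/s := add_le_add h2 h3
      _ = (8*(K+1)^2 + 2 + 2*K*|η|)/s := by ring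
  calc |s * Real.log (a*(η+a)/((u*s + (a+δ))*(η+(a+δ)+u*s))) + 2*u|
      = |(u - s * Real.log (1+x)) + (u - s * Real.log (1+y))| := by rw [hlog]; congr 1; ring
    _ ≤ |u - s * Real.log (1+x)| + |u - s * Real.log (1+y)| := abs_add_le _ _
    _ ≤ (2*(K+1)^2 + 1)/s + (8*(K+1)^2 + 2 + 2*K*|η|)/s := add_le_add e1 e2
    _ = (10*(K+1)^2 + 3 + 2*K*|η|)/s := by ring
/-- Taylor-expansion estimate: uniformly for `u` in a fixed compact interval,
`√a_ρ · log(a_ρ(η+a_ρ)/((u√a_ρ+⌈a_ρ⌉)(η+⌈a_ρ⌉+u√a_ρ))) = −2u + O(1/√a_ρ)`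
as `ρ → ∞`. -/
theorem log_taylor_estimate (η : ℝ) (hη : -1 < η) :
    ∀ K : ℝ, 0 < K → ∃ C : ℝ, ∃ R : ℝ, ∀ ρ : ℝ, R ≤ ρ → ∀ u : ℝ, |u| ≤ K →
      |Real.sqrt (aRho η ρ) *
          Real.log (aRho η ρ * (η + aRho η ρ) /
            ((u * Real.sqrt (aRho η ρ) + (⌈aRho η ρ⌉ : ℝ)) *
              (η + (⌈aRho η ρ⌉ : ℝ) + u * Real.sqrt (aRho η ρ)))) + 2 * u| ≤
        C / Real.sqrt (aRho η ρ) := by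
  intro K hK
  refine ⟨10*(K+1)^2 + 3 + 2*K*|η|,
    (max 4 (max (16*(K+1)^2) ((2+2*K*|η|)^2)) + |η|)^2, ?_⟩
  intro ρ hρ u hu
  set A := max 4 (max (16*(K+1)^2) ((2+2*K*|η|)^2)) with hA
  have hA0 : (0:ℝ) ≤ A := le_trans (by norm_num) (le_max_left _ _)
  have hρ0 : (0:ℝ) ≤ ρ := le_trans (by positivity) hρ
  have hsqρ : A + |η| ≤ Real.sqrt ρ := by
    have h := Real.sqrt_le_sqrt hρ
    rwa [Real.sqrt_sq (by positivity)] at h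
  have h1 : Real.sqrt (4*ρ) ≤ Real.sqrt (η^2+4*ρ) :=
    Real.sqrt_le_sqrt (by nlinarith [sq_nonneg η])
  have h2 : Real.sqrt (4*ρ) = 2*Real.sqrt ρ := by
    rw [show (4:ℝ)*ρ = 2^2*ρ by ring, Real.sqrt_mul (by positivity),
      Real.sqrt_sq (by norm_num)]
  have haA : A ≤ aRho η ρ := by
    unfold aRho
    have hη' : η ≤ |η| := le_abs_self η
    rw [h2] at h1
    rw [le_div_iff₀ (by norm_num : (0:ℝ) < 2)]
    linarith [abs_nonneg η]
  set a := aRho η ρ with hadef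
  set δ := (⌈a⌉:ℝ) - a with hδ
  have hδ0 : 0 ≤ δ := sub_nonneg.2 (Int.le_ceil a)
  have hδ1 : δ ≤ 1 := by
    have := Int.ceil_lt_add_one a
    rw [hδ]; linarith
  have hm : (⌈a⌉:ℝ) = a + δ := by rw [hδ]; ring
  rw [hm]
  exact core_est η K a u δ hη hK hu hδ0 hδ1 haA
end
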